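/- Fix k ∈ ℤ, t = t_k⁺, α > 0 and 0 < c ≤ Δ/(4√α). Let ξ satisfy ξ₀ + c√α < ξ < ξ₁ − c√α, and define C_L(ξ) = (2π²σ²Δ)^{−1}·ln( −1 − Δ/(ξ − ξ₁ − c√α) ) and C_R(ξ) = (2π²σ²Δ)^{−1}·ln( −1 − Δ/(ξ − ξ₁ + c√α) ). Then both logarithm arguments are strictly positive, C_L(ξ) < C_R(ξ), and for every η ∈ ℝ one has |η̂_s(t_k⁺, η) − ξ| < c√α if and only if η_AVG + C_L(ξ) < η < η_AVG + C_R(ξ), where η_AVG = ξ̄ − (ln a)/(2π²σ²Δ). -/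
import Mathlib


noncomputable section

open MeasureTheory

/-- `q(t,η) = a·e^{2πiΔt}·e^{2π²σ²Δ(η−ξ̄)}`. -/
def qFac (ξ₀ ξ₁ a σ t η : ℝ) : ℂ :=
  (a : ℂ) * Complex.exp (2 * Real.pi * Complex.I * (ξ₁ - ξ₀) * t) *
    (Real.exp (2 * Real.pi ^ 2 * σ ^ 2 * (ξ₁ - ξ₀) * (η - (ξ₀ + ξ₁) / 2)) : ℂ)

/-- The synchrosqueezing reassignment rule `η̂_s(t,η) = (ξ₀ + ξ₁·q)/(1 + q)`. -/
def etaS (ξ₀ ξ₁ a σ t η : ℝ) : ℂ :=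
  ((ξ₀ : ℂ) + (ξ₁ : ℂ) * qFac ξ₀ ξ₁ a σ t η) / (1 + qFac ξ₀ ξ₁ a σ t η)

/-- Auxiliary: solving `w < a·e^{β(η−m)}` for `η`. -/
lemma logkeyL (a β w m η : ℝ) (ha : 0 < a) (hβ : 0 < β) (hw : 0 < w) :
    w < a * Real.exp (β * (η - m)) ↔ m - Real.log a / β + β⁻¹ * Real.log w < η := by
  have e0 : a * Real.exp (β * (η - m)) = Real.exp (Real.log a + β * (η - m)) := by
    rw [Real.exp_add, Real.exp_log ha]
  rw [e0, ← Real.log_lt_iff_lt_exp hw]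
  have e1 : β * (Real.log a / β) = Real.log a := by field_simp
  have e2 : β * (β⁻¹ * Real.log w) = Real.log w := by field_simp
  constructor
  · intro h; nlinarith [h, e1, e2, hβ]
  · intro h; nlinarith [h, e1, e2, hβ]

/-- Auxiliary: solving `a·e^{β(η−m)} < w` for `η`. -/
lemma logkeyR (a β w m η : ℝ) (ha : 0 < a) (hβ : 0 < β) (hw : 0 < w) :
    a * Real.exp (β * (η - m)) < w ↔ η < m - Real.log a / β + β⁻¹ * Real.log w := by
  have e0 : a * Real.exp (β * (η - m)) = Real.exp (Real.log a + β * (η - m)) := by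
    rw [Real.exp_add, Real.exp_log ha]
  rw [e0, ← Real.lt_log_iff_exp_lt hw]
  have e1 : β * (Real.log a / β) = Real.log a := by field_simp
  have e2 : β * (β⁻¹ * Real.log w) = Real.log w := by field_simp
  constructor
  · intro h; nlinarith [h, e1, e2, hβ]
  · intro h; nlinarith [h, e1, e2, hβ]

/-- Auxiliary: two-sided bound on the mediant `(ξ₀ + ξ₁ Q)/(1+Q)`. -/
lemma mediant_bounds (ξ₀ ξ₁ ξ s Q : ℝ) (hQ : 0 < Q)
    (hd1 : 0 < ξ₁ - ξ + s) (hd2 : 0 < ξ₁ - ξ - s) :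
    (ξ - (ξ₀ + ξ₁ * Q) / (1 + Q) < s ↔ (ξ - ξ₀ - s) / (ξ₁ - ξ + s) < Q) ∧
    ((ξ₀ + ξ₁ * Q) / (1 + Q) - ξ < s ↔ Q < (ξ - ξ₀ + s) / (ξ₁ - ξ - s)) := by
  have h1Q : 0 < 1 + Q := by linarith
  constructor
  · rw [div_lt_iff₀ hd1]
    constructor
    · intro h
      have h' : ξ - s < (ξ₀ + ξ₁ * Q) / (1 + Q) := by linarith
      have := (lt_div_iff₀ h1Q).mp h'
      nlinarith [this]
    · intro h
      have h' : (ξ - s) * (1 + Q) < ξ₀ + ξ₁ * Q := by nlinarith [h]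
      have := (lt_div_iff₀ h1Q).mpr h'
      linarith
  · rw [lt_div_iff₀ hd2]
    constructor
    · intro h
      have h' : (ξ₀ + ξ₁ * Q) / (1 + Q) < ξ + s := by linarith
      have := (div_lt_iff₀ h1Q).mp h'
      nlinarith [this]
    · intro h
      have h' : ξ₀ + ξ₁ * Q < (ξ + s) * (1 + Q) := by nlinarith [h]
      have := (div_lt_iff₀ h1Q).mpr h'
      linarith

/-- at a constructive time `t_k⁺ = k/Δ`, for `0 < c ≤ Δ/(4√α)` and
`ξ₀ + c√α < ξ < ξ₁ − c√α`, the logarithm arguments defining `C_L(ξ), C_R(ξ)` are positive,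
`C_L(ξ) < C_R(ξ)`, and `|η̂_s(t_k⁺,η) − ξ| < c√α` iff
`η_AVG + C_L(ξ) < η < η_AVG + C_R(ξ)`. -/
theorem stmt18 (ξ₀ ξ₁ a σ α c : ℝ) (hξ : ξ₀ < ξ₁) (ha : 0 < a) (hσ : 0 < σ)
    (hα : 0 < α) (hc : 0 < c) (hc2 : c ≤ (ξ₁ - ξ₀) / (4 * Real.sqrt α)) (k : ℤ)
    (ξ : ℝ) (hξ1 : ξ₀ + c * Real.sqrt α < ξ) (hξ2 : ξ < ξ₁ - c * Real.sqrt α) :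
    0 < -1 - (ξ₁ - ξ₀) / (ξ - ξ₁ - c * Real.sqrt α) ∧
    0 < -1 - (ξ₁ - ξ₀) / (ξ - ξ₁ + c * Real.sqrt α) ∧
    (2 * Real.pi ^ 2 * σ ^ 2 * (ξ₁ - ξ₀))⁻¹ *
        Real.log (-1 - (ξ₁ - ξ₀) / (ξ - ξ₁ - c * Real.sqrt α)) <
      (2 * Real.pi ^ 2 * σ ^ 2 * (ξ₁ - ξ₀))⁻¹ *
        Real.log (-1 - (ξ₁ - ξ₀) / (ξ - ξ₁ + c * Real.sqrt α)) ∧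
    ∀ η : ℝ,
      ‖etaS ξ₀ ξ₁ a σ ((k : ℝ) / (ξ₁ - ξ₀)) η - (ξ : ℂ)‖ < c * Real.sqrt α ↔
        ((ξ₀ + ξ₁) / 2 - Real.log a / (2 * Real.pi ^ 2 * σ ^ 2 * (ξ₁ - ξ₀)) +
            (2 * Real.pi ^ 2 * σ ^ 2 * (ξ₁ - ξ₀))⁻¹ *
              Real.log (-1 - (ξ₁ - ξ₀) / (ξ - ξ₁ - c * Real.sqrt α)) < η ∧
          η < (ξ₀ + ξ₁) / 2 - Real.log a / (2 * Real.pi ^ 2 * σ ^ 2 * (ξ₁ - ξ₀)) +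
            (2 * Real.pi ^ 2 * σ ^ 2 * (ξ₁ - ξ₀))⁻¹ *
              Real.log (-1 - (ξ₁ - ξ₀) / (ξ - ξ₁ + c * Real.sqrt α))) := by
  have hπ := Real.pi_pos
  set s : ℝ := c * Real.sqrt α with hsdef
  have hs : 0 < s := mul_pos hc (Real.sqrt_pos.mpr hα)
  have hΔ : 0 < ξ₁ - ξ₀ := sub_pos.mpr hξ
  set β : ℝ := 2 * Real.pi ^ 2 * σ ^ 2 * (ξ₁ - ξ₀) with hβdef
  have hβ : 0 < β := by positivity
  have hd1 : 0 < ξ₁ - ξ + s := by linarith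
  have hd2 : 0 < ξ₁ - ξ - s := by linarith
  have hn1 : 0 < ξ - ξ₀ - s := by linarith
  have hn2 : 0 < ξ - ξ₀ + s := by linarith
  have hne1 : ξ - ξ₁ - s ≠ 0 := by intro h; linarith
  have hne2 : ξ - ξ₁ + s ≠ 0 := by intro h; linarith
  have hqL : -1 - (ξ₁ - ξ₀) / (ξ - ξ₁ - s) = (ξ - ξ₀ - s) / (ξ₁ - ξ + s) := by
    field_simp
    ring
  have hqR : -1 - (ξ₁ - ξ₀) / (ξ - ξ₁ + s) = (ξ - ξ₀ + s) / (ξ₁ - ξ - s) := by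
    field_simp
    ring
  have hqLpos : 0 < (ξ - ξ₀ - s) / (ξ₁ - ξ + s) := div_pos hn1 hd1
  have hqRpos : 0 < (ξ - ξ₀ + s) / (ξ₁ - ξ - s) := div_pos hn2 hd2
  have hqLR : (ξ - ξ₀ - s) / (ξ₁ - ξ + s) < (ξ - ξ₀ + s) / (ξ₁ - ξ - s) := by
    rw [div_lt_div_iff₀ hd1 hd2]
    nlinarith [mul_pos hs hΔ]
  refine ⟨by rw [hqL]; exact hqLpos, by rw [hqR]; exact hqRpos, ?_, ?_⟩
  · rw [hqL, hqR]
    exact mul_lt_mul_of_pos_left (Real.log_lt_log hqLpos hqLR) (inv_pos.mpr hβ)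
  intro η
  set m : ℝ := (ξ₀ + ξ₁) / 2 with hmdef
  set E : ℝ := Real.exp (β * (η - m)) with hEdef
  have hE : 0 < E := Real.exp_pos _
  have hQ : 0 < a * E := mul_pos ha hE
  have hqfac : qFac ξ₀ ξ₁ a σ ((k : ℝ) / (ξ₁ - ξ₀)) η = ((a * E : ℝ) : ℂ) := by
    unfold qFac
    have h1 : (2 * (Real.pi : ℂ) * Complex.I * ((ξ₁ : ℂ) - ξ₀) *
        (((k : ℝ) / (ξ₁ - ξ₀) : ℝ) : ℂ)) = (k : ℤ) * (2 * (Real.pi : ℂ) * Complex.I) := by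
      have hΔc : ((ξ₁ : ℂ) - ξ₀) ≠ 0 := by
        intro h
        have : (ξ₁ : ℝ) = ξ₀ := by exact_mod_cast sub_eq_zero.mp h
        linarith
      push_cast
      field_simp
    rw [h1, Complex.exp_int_mul_two_pi_mul_I]
    push_cast [hEdef, hβdef, hmdef]
    ring
  have h1Q : 0 < 1 + a * E := by linarith
  have hetaS : etaS ξ₀ ξ₁ a σ ((k : ℝ) / (ξ₁ - ξ₀)) η
      = (((ξ₀ + ξ₁ * (a * E)) / (1 + a * E) : ℝ) : ℂ) := by
    unfold etaS
    rw [hqfac]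
    push_cast
    ring
  have hnorm : ‖etaS ξ₀ ξ₁ a σ ((k : ℝ) / (ξ₁ - ξ₀)) η - (ξ : ℂ)‖
      = |(ξ₀ + ξ₁ * (a * E)) / (1 + a * E) - ξ| := by
    rw [hetaS,
      show (((ξ₀ + ξ₁ * (a * E)) / (1 + a * E) : ℝ) : ℂ) - (ξ : ℂ)
          = (((ξ₀ + ξ₁ * (a * E)) / (1 + a * E) - ξ : ℝ) : ℂ) by push_cast; ring]
    exact Complex.norm_real _
  obtain ⟨hmL, hmR⟩ := mediant_bounds ξ₀ ξ₁ ξ s (a * E) hQ hd1 hd2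
  rw [hnorm, hqL, hqR, abs_sub_lt_iff, hmL, hmR,
    logkeyL a β _ m η ha hβ hqLpos, logkeyR a β _ m η ha hβ hqRpos]
  tauto
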